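/- arXiv:2106.04023 — 2 statements merged into one kernel-verified Lean document; each statement's English description precedes it below -/
import Mathlib

section
/- Let K ⊆ ℝ^n × ℝ^m be nonempty and compact, q ∈ ℝ^m, and (x,θ) ∈ ℝ^n × ℝ. Then the following are equivalent: (i) for every λ ∈ ℝ^n and every (x̄,ȳ) ∈ K that minimizes (x',y') ↦ λ·x' + q·y' over K, the Lagrangian optimality cut λ·(x − x̄) + θ ≥ q·ȳ holds; (ii) for every π ∈ ℝ^n and every π₀ > 0, π·x + π₀θ ≥ inf{π·x' + π₀ (q·y') : (x',y') ∈ K}. -/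
/-!
For `π₀ > 0` the Lagrangian cut with coefficients `(π, π₀)` is `π₀` times the one with
coefficients `(π / π₀, 1)`, so it suffices to consider `π₀ = 1`. On a nonempty compact set the
infimum of the continuous Lagrangian `λ·x' + q·y'` is attained, and it is the value of the
Lagrangian at any of its minimizers `(x̄, ȳ)`; the cut `λ·x + θ ≥ min` is then exactly the
optimality cut at `(x̄, ȳ)`.
-/

open Set
open scoped Pointwise

theorem IsMinOn.isLeast_image {α β : Type*} [Preorder β] {f : α → β} {S : Set α} {a : α}
    (hmin : IsMinOn f S a) (ha : a ∈ S) : IsLeast (f '' S) (f a) :=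
  ⟨mem_image_of_mem f ha, forall_mem_image.2 hmin⟩

theorem IsCompact.csInf_image_le_iff {α β : Type*} [TopologicalSpace α]
    [ConditionallyCompleteLinearOrder β] [TopologicalSpace β] [ClosedIicTopology β]
    {S : Set α} {f : α → β} {c : β} (hne : S.Nonempty) (hS : IsCompact S)
    (hf : ContinuousOn f S) :
    sInf (f '' S) ≤ c ↔ ∀ a ∈ S, IsMinOn f S a → f a ≤ c := by
  constructor
  · intro h a ha hmin
    rwa [← (hmin.isLeast_image ha).csInf_eq]
  · intro h
    obtain ⟨a, ha, hmin⟩ := hS.exists_isMinOn hne hf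
    rw [(hmin.isLeast_image ha).csInf_eq]
    exact h a ha hmin

section LagrangianCuts

variable {ι κ : Type*} [Fintype ι] [Fintype κ]

def lagrangian (q : κ → ℝ) (lam : ι → ℝ) (w : (ι → ℝ) × (κ → ℝ)) : ℝ :=
  lam ⬝ᵥ w.1 + q ⬝ᵥ w.2

noncomputable def scenarioValue (K : Set ((ι → ℝ) × (κ → ℝ))) (q : κ → ℝ) (π : ι → ℝ) (π₀ : ℝ) : ℝ :=
  sInf {r | ∃ w ∈ K, r = π ⬝ᵥ w.1 + π₀ * q ⬝ᵥ w.2}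

theorem continuous_lagrangian (q : κ → ℝ) (lam : ι → ℝ) : Continuous (lagrangian q lam) := by
  unfold lagrangian dotProduct
  fun_prop

theorem scenarioValue_eq_mul_sInf_lagrangian (K : Set ((ι → ℝ) × (κ → ℝ))) (q : κ → ℝ)
    (π : ι → ℝ) {π₀ : ℝ} (hπ₀ : 0 < π₀) :
    scenarioValue K q π π₀ = π₀ * sInf (lagrangian q (π₀⁻¹ • π) '' K) := by
  have hscale : (fun w ↦ π₀ * lagrangian q (π₀⁻¹ • π) w) =
      fun w : (ι → ℝ) × (κ → ℝ) ↦ π ⬝ᵥ w.1 + π₀ * q ⬝ᵥ w.2 := by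
    funext w
    simp only [lagrangian, smul_dotProduct, smul_eq_mul]
    field_simp
  have hset : {r | ∃ w ∈ K, r = π ⬝ᵥ w.1 + π₀ * q ⬝ᵥ w.2} =
      π₀ • (lagrangian q (π₀⁻¹ • π) '' K) := by
    rw [← image_smul, image_image]
    simp only [smul_eq_mul, hscale]
    ext r
    simp [eq_comm]
  rw [scenarioValue, hset, Real.sInf_smul_of_nonneg hπ₀.le, smul_eq_mul]

theorem lagrangianCuts_iff (K : Set ((ι → ℝ) × (κ → ℝ))) (q : κ → ℝ) (x : ι → ℝ) (θ : ℝ) :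
    (∀ (π : ι → ℝ) (π₀ : ℝ), 0 < π₀ → π ⬝ᵥ x + π₀ * θ ≥ scenarioValue K q π π₀) ↔
      ∀ lam : ι → ℝ, sInf (lagrangian q lam '' K) ≤ lam ⬝ᵥ x + θ := by
  simp only [ge_iff_le]
  constructor
  · intro h lam
    simpa [scenarioValue_eq_mul_sInf_lagrangian K q lam one_pos] using h lam 1 one_pos
  · intro h π π₀ hπ₀
    rw [scenarioValue_eq_mul_sInf_lagrangian K q π hπ₀]
    calc π₀ * sInf (lagrangian q (π₀⁻¹ • π) '' K)
        ≤ π₀ * ((π₀⁻¹ • π) ⬝ᵥ x + θ) := mul_le_mul_of_nonneg_left (h _) hπ₀.le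
      _ = π ⬝ᵥ x + π₀ * θ := by
        rw [smul_dotProduct, smul_eq_mul]
        field_simp

theorem optimalityCut_iff_lagrangian_le (q : κ → ℝ) (lam x : ι → ℝ) (θ : ℝ)
    (w : (ι → ℝ) × (κ → ℝ)) :
    lam ⬝ᵥ (x - w.1) + θ ≥ q ⬝ᵥ w.2 ↔ lagrangian q lam w ≤ lam ⬝ᵥ x + θ := by
  rw [lagrangian, dotProduct_sub]
  constructor <;> intro h <;> linarith

theorem lagrangianOptimalityCuts_iff {K : Set ((ι → ℝ) × (κ → ℝ))} (hKne : K.Nonempty)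
    (hKcpt : IsCompact K) (q : κ → ℝ) (x : ι → ℝ) (θ : ℝ) (lam : ι → ℝ) :
    (∀ xb ∈ K, IsMinOn (lagrangian q lam) K xb → lam ⬝ᵥ (x - xb.1) + θ ≥ q ⬝ᵥ xb.2) ↔
      sInf (lagrangian q lam '' K) ≤ lam ⬝ᵥ x + θ := by
  simp only [optimalityCut_iff_lagrangian_le]
  exact (hKcpt.csInf_image_le_iff hKne (continuous_lagrangian q lam).continuousOn).symm

end LagrangianCuts

/-- Part of Proposition 3.1: Lagrangian optimality cuts are equivalent to
Lagrangian cuts with strictly positive coefficient π₀ on θ. -/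
theorem stmt_2 {n m : ℕ} (K : Set ((Fin n → ℝ) × (Fin m → ℝ)))
    (hKne : K.Nonempty) (hKcpt : IsCompact K) (q : Fin m → ℝ)
    (x : Fin n → ℝ) (θ : ℝ) :
    (∀ lam : Fin n → ℝ, ∀ xb ∈ K,
        (∀ w ∈ K, (∑ i, lam i * xb.1 i) + (∑ j, q j * xb.2 j) ≤
            (∑ i, lam i * w.1 i) + (∑ j, q j * w.2 j)) →
        (∑ i, lam i * (x i - xb.1 i)) + θ ≥ ∑ j, q j * xb.2 j) ↔
    (∀ (π : Fin n → ℝ) (π₀ : ℝ), 0 < π₀ →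
        (∑ i, π i * x i) + π₀ * θ ≥
          sInf {r : ℝ | ∃ w ∈ K, r = (∑ i, π i * w.1 i) + π₀ * (∑ j, q j * w.2 j)}) :=
  (forall_congr' (lagrangianOptimalityCuts_iff hKne hKcpt q x θ)).trans
    (lagrangianCuts_iff K q x θ).symm
end

section
/- Let K ⊆ ℝ^n × ℝ^m be nonempty, q ∈ ℝ^m, c ∈ ℝ^n, and suppose the set {c·x' + q·y' : (x',y') ∈ K} is bounded below, with v = inf{c·x' + q·y' : (x',y') ∈ K}. Then the infimum of c·x + θ over all (x,θ) ∈ ℝ^n × ℝ satisfying every Lagrangian cut — i.e. satisfying π·x + π₀θ ≥ inf{π·x' + π₀(q·y') : (x',y') ∈ K} for every (π,π₀) ∈ ℝ^n × ℝ with π₀ ≥ 0 such that the set {π·x' + π₀(q·y') : (x',y') ∈ K} is bounded below — is equal to v. -/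
/-! The master value is squeezed from both sides. Every `(x', y') ∈ K` yields the master point
`(x', q·y')` with the same objective value, since each Lagrangian cut is an infimum over `K`; and
the cut with coefficients `(c, 1)` is exactly `c·x + θ ≥ v`. -/

open Matrix

theorem csInf_eq_of_subset_of_forall_csInf_le {α : Type*} [ConditionallyCompleteLattice α]
    {s t : Set α} (hs : s.Nonempty) (hst : s ⊆ t) (h : ∀ z ∈ t, sInf s ≤ z) :
    sInf t = sInf s :=
  le_antisymm (csInf_le_csInf ⟨sInf s, h⟩ hs hst) (le_csInf (hs.mono hst) h)

section LagrangianCut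

variable {n m : ℕ} (K : Set ((Fin n → ℝ) × (Fin m → ℝ))) (q : Fin m → ℝ)

def lagrangianValues (π : Fin n → ℝ) (π₀ : ℝ) : Set ℝ :=
  {r | ∃ w ∈ K, r = π ⬝ᵥ w.1 + π₀ * (q ⬝ᵥ w.2)}

def SatisfiesLagrangianCuts (x : Fin n → ℝ) (θ : ℝ) : Prop :=
  ∀ (π : Fin n → ℝ) (π₀ : ℝ), 0 ≤ π₀ → BddBelow (lagrangianValues K q π π₀) →
    π ⬝ᵥ x + π₀ * θ ≥ sInf (lagrangianValues K q π π₀)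

variable {K}

theorem satisfiesLagrangianCuts_of_mem {w : (Fin n → ℝ) × (Fin m → ℝ)} (hw : w ∈ K) :
    SatisfiesLagrangianCuts K q w.1 (q ⬝ᵥ w.2) :=
  fun _ _ _ hbdd => csInf_le hbdd ⟨w, hw, rfl⟩

theorem lagrangianValues_one (c : Fin n → ℝ) :
    lagrangianValues K q c 1 = {r | ∃ w ∈ K, r = c ⬝ᵥ w.1 + q ⬝ᵥ w.2} := by
  simp only [lagrangianValues, one_mul]

end LagrangianCut

/-- Single-scenario case of Theorem 3.2: the Benders master problem with all
Lagrangian cuts added has optimal value equal to the original optimal value. -/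
theorem stmt_7 {n m : ℕ} (K : Set ((Fin n → ℝ) × (Fin m → ℝ))) (hKne : K.Nonempty)
    (q : Fin m → ℝ) (c : Fin n → ℝ)
    (hbdd : BddBelow {r : ℝ | ∃ w ∈ K, r = (∑ i, c i * w.1 i) + ∑ j, q j * w.2 j}) :
    sInf {z : ℝ | ∃ (x : Fin n → ℝ) (θ : ℝ),
      (∀ (π : Fin n → ℝ) (π₀ : ℝ), 0 ≤ π₀ →
        BddBelow {r : ℝ | ∃ w ∈ K, r = (∑ i, π i * w.1 i) + π₀ * (∑ j, q j * w.2 j)} →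
        (∑ i, π i * x i) + π₀ * θ ≥
          sInf {r : ℝ | ∃ w ∈ K, r = (∑ i, π i * w.1 i) + π₀ * (∑ j, q j * w.2 j)}) ∧
      z = (∑ i, c i * x i) + θ} =
    sInf {r : ℝ | ∃ w ∈ K, r = (∑ i, c i * w.1 i) + ∑ j, q j * w.2 j} := by
  change sInf {z | ∃ x θ, SatisfiesLagrangianCuts K q x θ ∧ z = c ⬝ᵥ x + θ} =
    sInf {r | ∃ w ∈ K, r = c ⬝ᵥ w.1 + q ⬝ᵥ w.2}
  change BddBelow {r | ∃ w ∈ K, r = c ⬝ᵥ w.1 + q ⬝ᵥ w.2} at hbdd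
  rw [← lagrangianValues_one] at hbdd ⊢
  obtain ⟨w₀, hw₀⟩ := hKne
  refine csInf_eq_of_subset_of_forall_csInf_le ⟨_, w₀, hw₀, rfl⟩ ?_ ?_
  · rintro _ ⟨w, hw, rfl⟩
    exact ⟨w.1, q ⬝ᵥ w.2, satisfiesLagrangianCuts_of_mem q hw, by rw [one_mul]⟩
  · rintro _ ⟨x, θ, hcuts, rfl⟩
    simpa only [one_mul] using hcuts c 1 zero_le_one hbdd
end
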